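/- For any c ≥ 0, the pointwise minimum of the function h(r) = 1 − max{r11+r10, r11+r01} and c plus the Bayes-operator average of a concave function is concave; consequently, the value function V_r defined by value iteration V_r^{(n+1)}(r) = min{h(r), c + E[V_r^{(n)}(r') | r]} starting from V_r^{(0)} = h remains concave at every iteration, where the expectation is over the Bayesian posterior update with likelihoods f0, f1. -/

import Mathlib

/-!
Write `ℓ` for the coordinate sum and `L_x r = (f1 x r11, f1 x r10, f0 x r01, f0 x r00)`. Then
`D(x) = ℓ (L_x r)` and `r' = L_x r / D(x)`, so the integrand `W(r') D(x)` of the Bayes operator is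
the perspective `P q = ℓ q · W(q / ℓ q)` of `W` evaluated at the linear image `L_x r`. On the cone
over the simplex, the perspective of a concave function is positively homogeneous and
superadditive, hence concave; so the integrand is concave in `r` for every `x`, and so is its
integral. For integrability, `r'` runs along a segment of the simplex, and a concave function on
a segment is bounded and agrees there with a measurable function (it is continuous inside), so
the integrand is measurable and dominated by `M (f0 + f1)`. Since `h` is a minimum of affine
functions and minima of concave functions are concave, induction gives every iterate.
-/

open MeasureTheory

/-- The probability simplex of refinement posteriors `(r11, r10, r01, r00)`. -/
def S4 : Set (ℝ × ℝ × ℝ × ℝ) :=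
  {r | 0 ≤ r.1 ∧ 0 ≤ r.2.1 ∧ 0 ≤ r.2.2.1 ∧ 0 ≤ r.2.2.2 ∧
    r.1 + r.2.1 + r.2.2.1 + r.2.2.2 = 1}

/-- Terminal error-probability cost `h(r) = 1 - max{r11+r10, r11+r01}`. -/
noncomputable def hCost (r : ℝ × ℝ × ℝ × ℝ) : ℝ :=
  1 - max (r.1 + r.2.1) (r.1 + r.2.2.1)

/-- Predictive density `D(x) = f1(x)(r11+r10) + f0(x)(r01+r00)`. -/
noncomputable def Dfun (f0 f1 : ℝ → ℝ) (x : ℝ) (r : ℝ × ℝ × ℝ × ℝ) : ℝ :=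
  f1 x * (r.1 + r.2.1) + f0 x * (r.2.2.1 + r.2.2.2)

/-- Bayesian posterior update of the refinement posteriors. -/
noncomputable def upd (f0 f1 : ℝ → ℝ) (x : ℝ) (r : ℝ × ℝ × ℝ × ℝ) :
    ℝ × ℝ × ℝ × ℝ :=
  (f1 x * r.1 / Dfun f0 f1 x r, f1 x * r.2.1 / Dfun f0 f1 x r,
    f0 x * r.2.2.1 / Dfun f0 f1 x r, f0 x * r.2.2.2 / Dfun f0 f1 x r)

/-- Bayes operator: `T V (r) = E[V(r') | r] = ∫ V(upd x r) D(x) dx`. -/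
noncomputable def Tb (f0 f1 : ℝ → ℝ) (V : ℝ × ℝ × ℝ × ℝ → ℝ)
    (r : ℝ × ℝ × ℝ × ℝ) : ℝ :=
  ∫ x : ℝ, V (upd f0 f1 x r) * Dfun f0 f1 x r

/-- Value iteration `V^{(0)} = h`, `V^{(n+1)} = min{h, c + T V^{(n)}}`. -/
noncomputable def Vit (f0 f1 : ℝ → ℝ) (c : ℝ) : ℕ → (ℝ × ℝ × ℝ × ℝ → ℝ)
  | 0 => hCost
  | n + 1 => fun r => min (hCost r) (c + Tb f0 f1 (Vit f0 f1 c n) r)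

open Set
open scoped Pointwise

section Perspective

variable {E : Type*} [AddCommGroup E] [Module ℝ E]

noncomputable def perspective (ℓ : E →ₗ[ℝ] ℝ) (W : E → ℝ) (q : E) : ℝ :=
  ℓ q * W ((ℓ q)⁻¹ • q)

variable {ℓ : E →ₗ[ℝ] ℝ} {W : E → ℝ} {s : Set E}

lemma perspective_smul_of_eq_one {p : E} (hp : ℓ p = 1) (c : ℝ) :
    perspective ℓ W (c • p) = c * W p := by
  rcases eq_or_ne c 0 with rfl | hc
  · simp [perspective]
  · simp [perspective, hp, smul_smul, hc]

lemma ConcaveOn.mul_add_mul_le_perspective (hW : ConcaveOn ℝ s W) (hℓ : ∀ p ∈ s, ℓ p = 1)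
    {p₁ p₂ : E} (hp₁ : p₁ ∈ s) (hp₂ : p₂ ∈ s) {c₁ c₂ : ℝ} (hc₁ : 0 ≤ c₁) (hc₂ : 0 ≤ c₂) :
    c₁ * W p₁ + c₂ * W p₂ ≤ perspective ℓ W (c₁ • p₁ + c₂ • p₂) := by
  rcases (add_nonneg hc₁ hc₂).eq_or_lt with hc | hc
  · obtain ⟨rfl, rfl⟩ : c₁ = 0 ∧ c₂ = 0 := ⟨by linarith, by linarith⟩
    simp [perspective]
  set m := (c₁ / (c₁ + c₂)) • p₁ + (c₂ / (c₁ + c₂)) • p₂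
  have hm : m ∈ s := hW.1 hp₁ hp₂ (by positivity) (by positivity) (by field_simp)
  have hq : c₁ • p₁ + c₂ • p₂ = (c₁ + c₂) • m := by
    simp only [m, smul_add, smul_smul, mul_div_cancel₀ _ hc.ne']
  rw [hq, perspective_smul_of_eq_one (hℓ m hm)]
  calc c₁ * W p₁ + c₂ * W p₂
      = (c₁ + c₂) * ((c₁ / (c₁ + c₂)) * W p₁ + (c₂ / (c₁ + c₂)) * W p₂) := by
        field_simp
    _ ≤ (c₁ + c₂) * W m := by
        gcongr
        exact hW.2 hp₁ hp₂ (by positivity) (by positivity) (by field_simp)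

lemma ConcaveOn.perspective_comp (hW : ConcaveOn ℝ s W) (hℓ : ∀ p ∈ s, ℓ p = 1)
    {F : Type*} [AddCommGroup F] [Module ℝ F] {t : Set F} (ht : Convex ℝ t) (L : F →ₗ[ℝ] E)
    (hL : MapsTo L t (Ici (0 : ℝ) • s)) :
    ConcaveOn ℝ t (fun r => perspective ℓ W (L r)) := by
  refine ⟨ht, fun r hr r' hr' a b ha hb hab => ?_⟩
  obtain ⟨c, hc, p, hp, hLr⟩ := hL hr
  obtain ⟨c', hc', p', hp', hLr'⟩ := hL hr'
  have key := hW.mul_add_mul_le_perspective hℓ hp hp' (mul_nonneg ha hc) (mul_nonneg hb hc')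
  simp only [map_add, map_smul, ← hLr, ← hLr', smul_smul,
    perspective_smul_of_eq_one (hℓ p hp), perspective_smul_of_eq_one (hℓ p' hp'), smul_eq_mul]
  linarith

end Perspective

section Interval

variable {a b : ℝ} {φ : ℝ → ℝ}

lemma ConcaveOn.exists_abs_le_of_Icc (hφ : ConcaveOn ℝ (Icc a b) φ) :
    ∃ M, ∀ t ∈ Icc a b, |φ t| ≤ M := by
  rcases lt_or_ge b a with hba | hab
  · exact ⟨0, fun t ht => absurd (ht.1.trans ht.2) (not_le.2 hba)⟩
  have ha : a ∈ Icc a b := left_mem_Icc.2 hab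
  have hb : b ∈ Icc a b := right_mem_Icc.2 hab
  set m := min (φ a) (φ b)
  have lower : ∀ t ∈ Icc a b, m ≤ φ t := fun t ht =>
    hφ.ge_on_segment ha hb (by rwa [segment_eq_Icc hab])
  -- the midpoint `(a + b) / 2` averages `t` with its reflection `a + b - t`
  refine ⟨|m| + |2 * φ ((a + b) / 2) - m|, fun t ht => abs_le.2 ⟨?_, ?_⟩⟩
  · linarith [lower t ht, neg_abs_le m, abs_nonneg (2 * φ ((a + b) / 2) - m)]
  · have ht' : a + b - t ∈ Icc a b := ⟨by linarith [ht.2], by linarith [ht.1]⟩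
    have mid := hφ.2 ht ht' (by norm_num : (0 : ℝ) ≤ 1 / 2) (by norm_num : (0 : ℝ) ≤ 1 / 2)
      (by norm_num)
    simp only [smul_eq_mul] at mid
    rw [show 1 / 2 * t + 1 / 2 * (a + b - t) = (a + b) / 2 by ring] at mid
    linarith [lower _ ht', le_abs_self (2 * φ ((a + b) / 2) - m), abs_nonneg m]

lemma ConcaveOn.exists_measurable_eqOn_Icc (hφ : ConcaveOn ℝ (Icc a b) φ) :
    ∃ ψ : ℝ → ℝ, Measurable ψ ∧ EqOn φ ψ (Icc a b) := by
  classical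
  set g : ℝ → ℝ := fun t => φ a + (t - a) / (b - a) * (φ b - φ a)
  have hcont : ContinuousOn φ (Ioo a b) := by
    simpa only [interior_Icc] using hφ.continuousOn_interior
  refine ⟨(Ioo a b).piecewise φ g,
    hcont.measurable_piecewise (by fun_prop) measurableSet_Ioo, fun t ht => ?_⟩
  by_cases htab : t ∈ Ioo a b
  · rw [piecewise_eq_of_mem _ _ _ htab]
  rw [piecewise_eq_of_notMem _ _ _ htab]
  rcases eq_or_lt_of_le ht.1 with rfl | hat
  · simp [g]
  obtain rfl : t = b := le_antisymm ht.2 (not_lt.1 fun h => htab ⟨hat, h⟩)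
  simp [g, div_self (sub_ne_zero.2 hat.ne')]

lemma ConcaveOn.integrable_mul_comp_div {α : Type*} [MeasurableSpace α] {μ : Measure α}
    (hφ : ConcaveOn ℝ (Icc 0 1) φ) {u v : α → ℝ} (hu : Integrable u μ) (hv : Integrable v μ)
    (hu₀ : ∀ x, 0 ≤ u x) (hv₀ : ∀ x, 0 ≤ v x) :
    Integrable (fun x => (u x + v x) * φ (u x / (u x + v x))) μ := by
  obtain ⟨M, hM⟩ := hφ.exists_abs_le_of_Icc
  obtain ⟨ψ, hψ, hφψ⟩ := hφ.exists_measurable_eqOn_Icc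
  have hτ : ∀ x, u x / (u x + v x) ∈ Icc (0 : ℝ) 1 := fun x =>
    ⟨div_nonneg (hu₀ x) (add_nonneg (hu₀ x) (hv₀ x)),
      div_le_one_of_le₀ (le_add_of_nonneg_right (hv₀ x)) (add_nonneg (hu₀ x) (hv₀ x))⟩
  have hmeas : AEStronglyMeasurable (fun x => (u x + v x) * φ (u x / (u x + v x))) μ := by
    simp only [fun x => hφψ (hτ x)]
    exact (hu.add hv).aestronglyMeasurable.mul
      (hψ.comp_aemeasurable (hu.aemeasurable.div (hu.add hv).aemeasurable)).aestronglyMeasurable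
  refine ((hu.add hv).mul_const M).mono' hmeas (Filter.Eventually.of_forall fun x => ?_)
  rw [Real.norm_eq_abs, abs_mul, abs_of_nonneg (add_nonneg (hu₀ x) (hv₀ x))]
  exact mul_le_mul_of_nonneg_left (hM _ (hτ x)) (add_nonneg (hu₀ x) (hv₀ x))

end Interval

section PerspectiveIntegral

variable {E : Type*} [AddCommGroup E] [Module ℝ E] {ℓ : E →ₗ[ℝ] ℝ} {W : E → ℝ} {s : Set E}

lemma perspective_smul_add_smul {p₀ p₁ : E} (hp₀ : ℓ p₀ = 1) (hp₁ : ℓ p₁ = 1) (u v : ℝ) :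
    perspective ℓ W (u • p₁ + v • p₀) =
      (u + v) * W (AffineMap.lineMap p₀ p₁ (u / (u + v))) := by
  rcases eq_or_ne (u + v) 0 with huv | huv
  · simp [perspective, hp₀, hp₁, huv]
  have hℓ : ℓ (AffineMap.lineMap p₀ p₁ (u / (u + v))) = 1 := by
    simp [AffineMap.lineMap_apply_module, hp₀, hp₁]
  rw [← perspective_smul_of_eq_one hℓ, AffineMap.lineMap_apply_module, smul_add, smul_smul,
    smul_smul, mul_div_cancel₀ _ huv, show (u + v) * (1 - u / (u + v)) = v by field_simp; ring,
    add_comm]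

lemma ConcaveOn.integrable_perspective {α : Type*} [MeasurableSpace α] {μ : Measure α}
    (hW : ConcaveOn ℝ s W) (hℓ : ∀ p ∈ s, ℓ p = 1) {p₀ p₁ : E} (hp₀ : p₀ ∈ s) (hp₁ : p₁ ∈ s)
    {u v : α → ℝ} (hu : Integrable u μ) (hv : Integrable v μ)
    (hu₀ : ∀ x, 0 ≤ u x) (hv₀ : ∀ x, 0 ≤ v x) :
    Integrable (fun x => perspective ℓ W (u x • p₁ + v x • p₀)) μ := by
  have hφ : ConcaveOn ℝ (Icc (0 : ℝ) 1) (W ∘ AffineMap.lineMap p₀ p₁) := by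
    refine (hW.comp_affineMap _).subset (fun t ht => ?_) (convex_Icc 0 1)
    exact hW.1.segment_subset hp₀ hp₁ (segment_eq_image_lineMap ℝ p₀ p₁ ▸ mem_image_of_mem _ ht)
  simp only [perspective_smul_add_smul (hℓ p₀ hp₀) (hℓ p₁ hp₁)]
  exact hφ.integrable_mul_comp_div hu hv hu₀ hv₀

lemma concaveOn_integral {α : Type*} [MeasurableSpace α] {μ : Measure α} {g : α → E → ℝ}
    (hs : Convex ℝ s) (hg : ∀ x, ConcaveOn ℝ s (g x))
    (hint : ∀ r ∈ s, Integrable (fun x => g x r) μ) :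
    ConcaveOn ℝ s (fun r => ∫ x, g x r ∂μ) := by
  refine ⟨hs, fun r hr r' hr' a b ha hb hab => ?_⟩
  simp only [smul_eq_mul]
  rw [← integral_const_mul, ← integral_const_mul,
    ← integral_add ((hint r hr).const_mul a) ((hint r' hr').const_mul b)]
  exact integral_mono (((hint r hr).const_mul a).add ((hint r' hr').const_mul b))
    (hint _ (hs hr hr' ha hb hab)) fun x => (hg x).2 hr hr' ha hb hab

end PerspectiveIntegral

section Simplex

noncomputable def coordSum : (ℝ × ℝ × ℝ × ℝ) →ₗ[ℝ] ℝ where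
  toFun q := q.1 + q.2.1 + q.2.2.1 + q.2.2.2
  map_add' _ _ := by simp only [Prod.fst_add, Prod.snd_add]; ring
  map_smul' _ _ := by
    simp only [Prod.smul_fst, Prod.smul_snd, smul_eq_mul, RingHom.id_apply]; ring

lemma nonneg_iff_coords (q : ℝ × ℝ × ℝ × ℝ) :
    0 ≤ q ↔ 0 ≤ q.1 ∧ 0 ≤ q.2.1 ∧ 0 ≤ q.2.2.1 ∧ 0 ≤ q.2.2.2 := by
  simp only [Prod.le_def, Prod.fst_zero, Prod.snd_zero]

lemma S4_eq : S4 = Ici 0 ∩ coordSum ⁻¹' {1} := by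
  ext r
  simp only [S4, coordSum, mem_inter_iff, mem_Ici, mem_preimage, mem_singleton_iff,
    LinearMap.coe_mk, AddHom.coe_mk, nonneg_iff_coords, and_assoc]
  exact Iff.rfl

lemma convex_S4 : Convex ℝ S4 := by
  rw [S4_eq]
  exact (convex_Ici 0).inter ((convex_singleton 1).linear_preimage coordSum)

lemma coordSum_of_mem_S4 : ∀ p ∈ S4, coordSum p = 1 := fun _ hp => (S4_eq ▸ hp).2

lemma mem_Ici_smul_S4 {q : ℝ × ℝ × ℝ × ℝ} (hq : 0 ≤ q) : q ∈ Ici (0 : ℝ) • S4 := by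
  obtain ⟨h₁, h₂, h₃, h₄⟩ := (nonneg_iff_coords q).1 hq
  have hsum : coordSum q = q.1 + q.2.1 + q.2.2.1 + q.2.2.2 := rfl
  rcases (show 0 ≤ coordSum q by rw [hsum]; positivity).eq_or_lt with h0 | hpos
  · have hq0 : q = 0 := by ext <;> simp only [Prod.fst_zero, Prod.snd_zero] <;> linarith
    exact mem_smul.2 ⟨0, mem_Ici.2 le_rfl, (1, 0, 0, 0), by simp [S4], by rw [hq0, zero_smul]⟩
  refine mem_smul.2 ⟨coordSum q, hpos.le, (coordSum q)⁻¹ • q, ?_, ?_⟩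
  · rw [S4_eq]
    exact ⟨smul_nonneg (inv_nonneg.2 hpos.le) hq, by simp [hpos.ne']⟩
  · rw [smul_smul, mul_inv_cancel₀ hpos.ne', one_smul]

lemma concaveOn_hCost : ConcaveOn ℝ S4 hCost :=
  (concaveOn_const 1 convex_S4).sub
    (((LinearMap.fst ℝ ℝ _ + LinearMap.fst ℝ ℝ _ ∘ₗ LinearMap.snd ℝ ℝ _).convexOn convex_S4).sup
      ((LinearMap.fst ℝ ℝ _ +
        LinearMap.fst ℝ ℝ _ ∘ₗ LinearMap.snd ℝ ℝ _ ∘ₗ LinearMap.snd ℝ ℝ _).convexOn convex_S4))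

end Simplex

section Bayes

variable {f0 f1 : ℝ → ℝ}

noncomputable def likelihood (f0 f1 : ℝ → ℝ) (x : ℝ) :
    (ℝ × ℝ × ℝ × ℝ) →ₗ[ℝ] ℝ × ℝ × ℝ × ℝ where
  toFun q := (f1 x * q.1, f1 x * q.2.1, f0 x * q.2.2.1, f0 x * q.2.2.2)
  map_add' _ _ := by simp only [Prod.fst_add, Prod.snd_add, mul_add, Prod.mk_add_mk]
  map_smul' _ _ := by
    simp only [Prod.smul_fst, Prod.smul_snd, smul_eq_mul, RingHom.id_apply, Prod.smul_mk]
    ext <;> simp only <;> ring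

lemma likelihood_apply (x : ℝ) (r : ℝ × ℝ × ℝ × ℝ) :
    likelihood f0 f1 x r = f1 x • (r.1, r.2.1, 0, 0) + f0 x • (0, 0, r.2.2.1, r.2.2.2) := by
  ext <;> simp [likelihood]

lemma likelihood_nonneg (hf0 : ∀ x, 0 ≤ f0 x) (hf1 : ∀ x, 0 ≤ f1 x) (x : ℝ)
    {r : ℝ × ℝ × ℝ × ℝ} (hr : 0 ≤ r) : 0 ≤ likelihood f0 f1 x r := by
  obtain ⟨h₁, h₂, h₃, h₄⟩ := (nonneg_iff_coords r).1 hr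
  simp only [likelihood, LinearMap.coe_mk, AddHom.coe_mk, nonneg_iff_coords]
  exact ⟨mul_nonneg (hf1 x) h₁, mul_nonneg (hf1 x) h₂, mul_nonneg (hf0 x) h₃,
    mul_nonneg (hf0 x) h₄⟩

lemma mul_Dfun_eq_perspective (W : ℝ × ℝ × ℝ × ℝ → ℝ) (x : ℝ) (r : ℝ × ℝ × ℝ × ℝ) :
    W (upd f0 f1 x r) * Dfun f0 f1 x r = perspective coordSum W (likelihood f0 f1 x r) := by
  have hD : coordSum (likelihood f0 f1 x r) = Dfun f0 f1 x r := by
    simp only [coordSum, likelihood, Dfun, LinearMap.coe_mk, AddHom.coe_mk]; ring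
  have hupd : upd f0 f1 x r = (Dfun f0 f1 x r)⁻¹ • likelihood f0 f1 x r := by
    simp only [upd, likelihood, LinearMap.coe_mk, AddHom.coe_mk, Prod.smul_mk, smul_eq_mul,
      div_eq_inv_mul]
  rw [perspective, hD, hupd, mul_comm]

variable {W : ℝ × ℝ × ℝ × ℝ → ℝ}

lemma integrable_perspective_likelihood (hf0 : ∀ x, 0 ≤ f0 x) (hf1 : ∀ x, 0 ≤ f1 x)
    (hf0i : Integrable f0) (hf1i : Integrable f1) (hW : ConcaveOn ℝ S4 W)
    {r : ℝ × ℝ × ℝ × ℝ} (hr : r ∈ S4) :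
    Integrable (fun x => perspective coordSum W (likelihood f0 f1 x r)) := by
  obtain ⟨hr₁, hr₂, hr₃, hr₄, -⟩ := hr
  obtain ⟨c₁, hc₁, p₁, hp₁, hq₁⟩ := mem_smul.1 <| mem_Ici_smul_S4 (q := (r.1, r.2.1, 0, 0))
    ((nonneg_iff_coords _).2 ⟨hr₁, hr₂, le_rfl, le_rfl⟩)
  obtain ⟨c₀, hc₀, p₀, hp₀, hq₀⟩ := mem_smul.1 <| mem_Ici_smul_S4 (q := (0, 0, r.2.2.1, r.2.2.2))
    ((nonneg_iff_coords _).2 ⟨le_rfl, le_rfl, hr₃, hr₄⟩)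
  have hsplit : ∀ x, likelihood f0 f1 x r = (f1 x * c₁) • p₁ + (f0 x * c₀) • p₀ := fun x => by
    rw [likelihood_apply, ← hq₁, ← hq₀, smul_smul, smul_smul]
  simp only [hsplit]
  exact hW.integrable_perspective coordSum_of_mem_S4 hp₀ hp₁ (hf1i.mul_const _)
    (hf0i.mul_const _) (fun x => mul_nonneg (hf1 x) hc₁) (fun x => mul_nonneg (hf0 x) hc₀)

lemma concaveOn_Tb (hf0 : ∀ x, 0 ≤ f0 x) (hf1 : ∀ x, 0 ≤ f1 x)
    (hf0i : Integrable f0) (hf1i : Integrable f1) (hW : ConcaveOn ℝ S4 W) :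
    ConcaveOn ℝ S4 (Tb f0 f1 W) := by
  have hTb : Tb f0 f1 W = fun r => ∫ x, perspective coordSum W (likelihood f0 f1 x r) := by
    funext r
    simp only [Tb, mul_Dfun_eq_perspective]
  rw [hTb]
  refine concaveOn_integral convex_S4 (fun x => ?_)
    (fun r hr => integrable_perspective_likelihood hf0 hf1 hf0i hf1i hW hr)
  refine hW.perspective_comp coordSum_of_mem_S4 convex_S4 _ fun r hr => ?_
  exact mem_Ici_smul_S4 (likelihood_nonneg hf0 hf1 x (S4_eq ▸ hr).1)

end Bayes

theorem value_iteration_concave_general (f0 f1 : ℝ → ℝ)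
    (hf0 : ∀ x, 0 ≤ f0 x) (hf1 : ∀ x, 0 ≤ f1 x)
    (hf0i : Integrable f0) (hf1i : Integrable f1)
    (c : ℝ) :
    (∀ W : ℝ × ℝ × ℝ × ℝ → ℝ, ConcaveOn ℝ S4 W →
      ConcaveOn ℝ S4 (fun r => min (hCost r) (c + Tb f0 f1 W r))) ∧
    ∀ n : ℕ, ConcaveOn ℝ S4 (Vit f0 f1 c n) := by
  have hstep : ∀ W : ℝ × ℝ × ℝ × ℝ → ℝ, ConcaveOn ℝ S4 W →
      ConcaveOn ℝ S4 (fun r => min (hCost r) (c + Tb f0 f1 W r)) := fun W hW =>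
    concaveOn_hCost.inf ((concaveOn_const c convex_S4).add (concaveOn_Tb hf0 hf1 hf0i hf1i hW))
  refine ⟨hstep, fun n => ?_⟩
  induction n with
  | zero => exact concaveOn_hCost
  | succ n ih => exact hstep _ ih

/-- For `c ≥ 0`, the pointwise minimum of `h` and `c` plus the
Bayes-operator average of a concave function is concave; consequently every
iterate of the value iteration starting from `h` is concave on the simplex. -/
theorem value_iteration_concave (f0 f1 : ℝ → ℝ)
    (hf0m : Measurable f0) (hf1m : Measurable f1)
    (hf0 : ∀ x, 0 ≤ f0 x) (hf1 : ∀ x, 0 ≤ f1 x)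
    (hf0i : Integrable f0) (hf1i : Integrable f1)
    (hf0int : ∫ x, f0 x = 1) (hf1int : ∫ x, f1 x = 1)
    (c : ℝ) (hc : 0 ≤ c) :
    (∀ W : ℝ × ℝ × ℝ × ℝ → ℝ, ConcaveOn ℝ S4 W →
      ConcaveOn ℝ S4 (fun r => min (hCost r) (c + Tb f0 f1 W r))) ∧
    ∀ n : ℕ, ConcaveOn ℝ S4 (Vit f0 f1 c n) :=
  value_iteration_concave_general f0 f1 hf0 hf1 hf0i hf1i c
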